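/- arXiv:2005.01378 — 7 statements merged into one kernel-verified Lean document; each statement's English description precedes it below -/
import Mathlib

section
/- There is a universal constant ε₀ > 0 such that the following holds. Let 0 < ε ≤ ε₀ with εN an integer, and let constants satisfy c₁ ≥ 1, c₂ ≥ 1, c₃ ≥ 5c₁, and c₄ ≥ max(100, 6c₃, 50c₁). Assume the concentration condition with constant c₁. Let w ∈ Δ_{N,2ε}, let u be a unit vector with uᵀΣ_w u = ‖Σ_w‖₂, set r = ‖μ_w − μ*‖₂, and assume r ≥ c₂ ε √(ln(1/ε)) and λ_max(Σ_w) ≥ 1 + c₄ r²/ε. Then there exists i ∈ B with w_i > 0 such that (∇_w F(w,u))_i − (uᵀμ*)·(uᵀ(μ* − 2μ_w)) > 2c₃ r²/ε². -/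
open Matrix Finset RealInnerProductSpace

/-- Euclidean (ℓ²) norm of a vector in `Fin n → ℝ`. -/
noncomputable def vnorm {n : ℕ} (v : Fin n → ℝ) : ℝ := Real.sqrt (∑ i, v i ^ 2)

/-- Spectral norm (ℓ²-operator norm) of a matrix. -/
noncomputable def specNorm {m n : ℕ} (A : Matrix (Fin m) (Fin n) ℝ) : ℝ :=
  ‖LinearMap.toContinuousLinearMap (Matrix.toEuclideanLin A)‖

/-- Largest eigenvalue of a symmetric matrix, as the supremum of the Rayleigh quotient
over the unit sphere. -/
noncomputable def lambdaMax {n : ℕ} (A : Matrix (Fin n) (Fin n) ℝ) : ℝ :=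
  sSup {r | ∃ v : Fin n → ℝ, vnorm v = 1 ∧ r = v ⬝ᵥ A.mulVec v}

/-- Weighted empirical mean `μ_w = X w`. -/
noncomputable def muW {d N : ℕ} (X : Matrix (Fin d) (Fin N) ℝ) (w : Fin N → ℝ) : Fin d → ℝ :=
  X.mulVec w

/-- Weighted empirical covariance `Σ_w = ∑ i, w_i (X_i - μ_w)(X_i - μ_w)ᵀ`. -/
noncomputable def covW {d N : ℕ} (X : Matrix (Fin d) (Fin N) ℝ) (w : Fin N → ℝ) :
    Matrix (Fin d) (Fin d) ℝ :=
  ∑ i : Fin N, w i • Matrix.vecMulVec (Xᵀ i - X.mulVec w) (Xᵀ i - X.mulVec w)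

/-- The constraint set `Δ_{N,ε}`. -/
def deltaSet (N : ℕ) (ε : ℝ) : Set (Fin N → ℝ) :=
  {w | (∑ i, w i) = 1 ∧ ∀ i, 0 ≤ w i ∧ w i ≤ 1 / ((1 - ε) * N)}

/-- Gradient in `w` of `F(w,u) = uᵀ Σ_w u`: the `i`-th coordinate is
`(X_iᵀu)² − 2(uᵀXw)(X_iᵀu)`. -/
noncomputable def gradFw {d N : ℕ} (X : Matrix (Fin d) (Fin N) ℝ) (w : Fin N → ℝ)
    (u : Fin d → ℝ) : Fin N → ℝ :=
  fun i => (Xᵀ i ⬝ᵥ u) ^ 2 - 2 * (u ⬝ᵥ X.mulVec w) * (Xᵀ i ⬝ᵥ u)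

/-- The matrix `Y = exp(ρ Σ_w) / tr(exp(ρ Σ_w))`. -/
noncomputable def ymat {d N : ℕ} (X : Matrix (Fin d) (Fin N) ℝ) (ρ : ℝ) (w : Fin N → ℝ) :
    Matrix (Fin d) (Fin d) ℝ :=
  ((NormedSpace.exp (ρ • covW X w)).trace)⁻¹ • NormedSpace.exp (ρ • covW X w)

/-- The softmax objective `f(w) = (1/ρ) ln tr exp(ρ Σ_w)`. -/
noncomputable def smaxObj {d N : ℕ} (X : Matrix (Fin d) (Fin N) ℝ) (ρ : ℝ) (w : Fin N → ℝ) : ℝ :=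
  (1 / ρ) * Real.log (NormedSpace.exp (ρ • covW X w)).trace

/-- Gradient of the softmax objective: `∇f(w)_i = X_iᵀ Y X_i − 2 X_iᵀ Y μ_w`. -/
noncomputable def gradSmax {d N : ℕ} (X : Matrix (Fin d) (Fin N) ℝ) (ρ : ℝ) (w : Fin N → ℝ) :
    Fin N → ℝ :=
  fun i => Xᵀ i ⬝ᵥ (ymat X ρ w).mulVec (Xᵀ i) - 2 * (Xᵀ i ⬝ᵥ (ymat X ρ w).mulVec (muW X w))

/-- Matrix logarithm of a symmetric matrix, via the spectral theorem (junk value `0` on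
non-Hermitian input). -/
noncomputable def matLog {n : ℕ} (Y : Matrix (Fin n) (Fin n) ℝ) : Matrix (Fin n) (Fin n) ℝ :=
  if h : Y.IsHermitian then h.cfc Real.log else 0

/-! Write `a i = X_iᵀu` and `b = uᵀμ*`. Since `uᵀΣ_w u` is the variance of `a` under `w`, it
is at most the second moment of `a` about `b`. Concentration bounds the contribution of the
good samples by `1 + c₁ ε ln(1/ε) ≤ 1 + c₁ r²/ε` (as `r ≥ ε √ln(1/ε)`), so the bad samples
contribute at least `(c₄ - c₁) r²/ε`. Their total weight is at most `ε/(1 - 2ε)`, so some bad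
sample with positive weight has `(a i - b)² ≳ c₄ r²/ε²`. The gradient coordinate, shifted as in
the statement, equals `(a i - b)² - 2 uᵀ(μ_w - μ*) (a i - b) ≥ (a i - b)²/2 - 2r²`, which
beats `2 c₃ r²/ε²`. -/

lemma vnorm_eq_norm_toLp {n : ℕ} (v : Fin n → ℝ) : vnorm v = ‖WithLp.toLp 2 v‖ := by
  simp [EuclideanSpace.norm_eq, vnorm]

lemma dotProduct_self_of_vnorm_eq_one {n : ℕ} {u : Fin n → ℝ} (hu : vnorm u = 1) :
    u ⬝ᵥ u = 1 := by
  have : ∑ i, u i ^ 2 = 1 := by rwa [vnorm, Real.sqrt_eq_one] at hu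
  simpa [dotProduct, sq] using this

lemma abs_dotProduct_mulVec_le_specNorm {m n : ℕ} (A : Matrix (Fin m) (Fin n) ℝ)
    (u : Fin m → ℝ) (v : Fin n → ℝ) :
    |u ⬝ᵥ A *ᵥ v| ≤ specNorm A * (vnorm u * vnorm v) := by
  have h : u ⬝ᵥ A *ᵥ v = ⟪WithLp.toLp 2 u,
      LinearMap.toContinuousLinearMap (Matrix.toEuclideanLin A) (WithLp.toLp 2 v)⟫ := by
    simp [EuclideanSpace.inner_toLp_toLp, dotProduct_comm]
  rw [h, vnorm_eq_norm_toLp, vnorm_eq_norm_toLp]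
  calc _ ≤ ‖WithLp.toLp 2 u‖ *
        ‖LinearMap.toContinuousLinearMap (Matrix.toEuclideanLin A) (WithLp.toLp 2 v)‖ :=
        abs_real_inner_le_norm _ _
    _ ≤ ‖WithLp.toLp 2 u‖ * (specNorm A * ‖WithLp.toLp 2 v‖) := by
        gcongr; exact ContinuousLinearMap.le_opNorm _ _
    _ = _ := by ring

lemma abs_dotProduct_le_vnorm_mul {n : ℕ} (u v : Fin n → ℝ) :
    |u ⬝ᵥ v| ≤ vnorm u * vnorm v := by
  rw [vnorm_eq_norm_toLp, vnorm_eq_norm_toLp]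
  simpa [EuclideanSpace.inner_toLp_toLp, dotProduct_comm] using
    abs_real_inner_le_norm (WithLp.toLp 2 u) (WithLp.toLp 2 v)

lemma lambdaMax_le_specNorm {n : ℕ} (A : Matrix (Fin n) (Fin n) ℝ) :
    lambdaMax A ≤ specNorm A := by
  refine Real.sSup_le ?_ (norm_nonneg _)
  rintro _ ⟨v, hv, rfl⟩
  simpa [hv] using (le_abs_self _).trans (abs_dotProduct_mulVec_le_specNorm A v v)

lemma dotProduct_sum_smul_vecMulVec_mulVec {n : ℕ} {ι : Type*} (s : Finset ι) (c : ι → ℝ)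
    (z : ι → Fin n → ℝ) (u : Fin n → ℝ) :
    u ⬝ᵥ (∑ i ∈ s, c i • vecMulVec (z i) (z i)) *ᵥ u = ∑ i ∈ s, c i * (z i ⬝ᵥ u) ^ 2 := by
  simp only [sum_mulVec, dotProduct_sum, smul_mulVec, vecMulVec_mulVec, dotProduct_smul]
  refine Finset.sum_congr rfl fun i _ => ?_
  simp [dotProduct_comm u, sq]

lemma dotProduct_muW {d N : ℕ} (X : Matrix (Fin d) (Fin N) ℝ) (w : Fin N → ℝ)
    (u : Fin d → ℝ) : u ⬝ᵥ muW X w = ∑ i, w i * (Xᵀ i ⬝ᵥ u) := by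
  rw [muW, dotProduct_mulVec, dotProduct_comm]
  simp [vecMul, dotProduct, mul_comm]

lemma dotProduct_covW_mulVec {d N : ℕ} (X : Matrix (Fin d) (Fin N) ℝ) (w : Fin N → ℝ)
    (u : Fin d → ℝ) :
    u ⬝ᵥ covW X w *ᵥ u = ∑ i, w i * (Xᵀ i ⬝ᵥ u - u ⬝ᵥ muW X w) ^ 2 := by
  simp only [covW, dotProduct_sum_smul_vecMulVec_mulVec, sub_dotProduct, muW,
    dotProduct_comm (X *ᵥ w)]

/-- Bias–variance decomposition for weights summing to one. -/
lemma sum_mul_sub_sq_eq {ι : Type*} (s : Finset ι) {w : ι → ℝ} (hw : ∑ i ∈ s, w i = 1)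
    (a : ι → ℝ) (b : ℝ) :
    ∑ i ∈ s, w i * (a i - b) ^ 2 =
      ∑ i ∈ s, w i * (a i - ∑ j ∈ s, w j * a j) ^ 2 + (∑ j ∈ s, w j * a j - b) ^ 2 := by
  set m := ∑ j ∈ s, w j * a j
  have hexpand : ∀ c, ∑ i ∈ s, w i * (a i - c) ^ 2 =
      ∑ i ∈ s, w i * a i ^ 2 - 2 * c * m + c ^ 2 := by
    intro c
    simp only [show ∀ i, w i * (a i - c) ^ 2 = w i * a i ^ 2 - 2 * c * (w i * a i) + c ^ 2 * w i
      from fun i => by ring, Finset.sum_add_distrib, Finset.sum_sub_distrib, ← Finset.mul_sum, hw]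
    ring
  rw [hexpand, hexpand]
  ring

lemma dotProduct_mulVec_le_of_specNorm_sub_one_le {n : ℕ} {M : Matrix (Fin n) (Fin n) ℝ}
    {δ : ℝ} (hM : specNorm (M - 1) ≤ δ) {u : Fin n → ℝ} (hu : vnorm u = 1) :
    u ⬝ᵥ M *ᵥ u ≤ 1 + δ := by
  have h := (abs_le.mp (abs_dotProduct_mulVec_le_specNorm (M - 1) u u)).2
  rw [sub_mulVec, dotProduct_sub, one_mulVec, dotProduct_self_of_vnorm_eq_one hu, hu] at h
  linarith

lemma sum_le_card_mul_of_mem_deltaSet {N : ℕ} {δ : ℝ} {w : Fin N → ℝ} (hw : w ∈ deltaSet N δ)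
    (s : Finset (Fin N)) : ∑ i ∈ s, w i ≤ s.card * (1 / ((1 - δ) * N)) := by
  simpa using Finset.sum_le_sum fun i (_ : i ∈ s) => (hw.2 i).2

lemma exists_pos_lt_of_sum_mul_lt {ι : Type*} {s : Finset ι} {w f : ι → ℝ}
    (hw : ∀ i ∈ s, 0 ≤ w i) {t : ℝ} (h : (∑ i ∈ s, w i) * t < ∑ i ∈ s, w i * f i) :
    ∃ i ∈ s, 0 < w i ∧ t < f i := by
  by_contra! hcon
  refine h.not_ge ?_
  rw [Finset.sum_mul]
  refine Finset.sum_le_sum fun i hi => ?_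
  rcases (hw i hi).eq_or_lt with h0 | h0
  · simp [← h0]
  · exact mul_le_mul_of_nonneg_left (hcon i hi h0) h0.le

lemma gradFw_sub_eq {d N : ℕ} (X : Matrix (Fin d) (Fin N) ℝ) (w : Fin N → ℝ)
    (u μ : Fin d → ℝ) (i : Fin N) :
    gradFw X w u i - (u ⬝ᵥ μ) * (u ⬝ᵥ (μ - (2 : ℝ) • muW X w)) =
      (Xᵀ i ⬝ᵥ u - u ⬝ᵥ μ) ^ 2 - 2 * (u ⬝ᵥ (muW X w - μ)) * (Xᵀ i ⬝ᵥ u - u ⬝ᵥ μ) := by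
  simp only [gradFw, muW, dotProduct_sub, dotProduct_smul, smul_eq_mul]
  ring

lemma dotProduct_covW_mulVec_le_add_sum {d N : ℕ} {X : Matrix (Fin d) (Fin N) ℝ}
    {μ : Fin d → ℝ} {G B : Finset (Fin N)} (hGB : Disjoint G B) (hGBu : G ∪ B = univ)
    {w : Fin N → ℝ} (hw : ∑ i, w i = 1) {u : Fin d → ℝ} (hu : vnorm u = 1) {δ : ℝ}
    (hG : specNorm ((∑ i ∈ G, w i • vecMulVec (Xᵀ i - μ) (Xᵀ i - μ)) - 1) ≤ δ) :
    u ⬝ᵥ covW X w *ᵥ u ≤ 1 + δ + ∑ i ∈ B, w i * (Xᵀ i ⬝ᵥ u - u ⬝ᵥ μ) ^ 2 := by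
  have hGu := dotProduct_mulVec_le_of_specNorm_sub_one_le hG hu
  rw [dotProduct_sum_smul_vecMulVec_mulVec] at hGu
  simp only [sub_dotProduct, dotProduct_comm μ] at hGu
  have hsplit := sum_mul_sub_sq_eq univ hw (fun i => Xᵀ i ⬝ᵥ u) (u ⬝ᵥ μ)
  rw [← hGBu, sum_union hGB, hGBu] at hsplit
  rw [dotProduct_covW_mulVec, dotProduct_muW]
  nlinarith

lemma sq_mul_le_sq_of_mul_mul_sqrt_le {c ε L r : ℝ} (hc : 1 ≤ c) (hε : 0 ≤ ε) (hL : 0 ≤ L)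
    (h : c * ε * √L ≤ r) : ε ^ 2 * L ≤ r ^ 2 := by
  have h' : ε * √L ≤ r :=
    calc ε * √L ≤ c * (ε * √L) := le_mul_of_one_le_left (by positivity) hc
      _ ≤ r := by rwa [← mul_assoc]
  simpa [mul_pow, Real.sq_sqrt hL] using pow_le_pow_left₀ (by positivity) h' 2

lemma two_mul_lt_sq_sub_two_mul {s t r P c₃ c₄ : ℝ} (hs : 9 / 10 * c₄ * P < s ^ 2)
    (ht : t ^ 2 ≤ r ^ 2) (hrP : r ^ 2 ≤ P) (hc₄ : 100 ≤ c₄) (hc₃ : 6 * c₃ ≤ c₄) :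
    2 * c₃ * P < s ^ 2 - 2 * t * s := by
  have hP : 0 ≤ P := (sq_nonneg r).trans hrP
  nlinarith [sq_nonneg (s - 2 * t), mul_nonneg hP (by linarith : 0 ≤ 9 / 20 * c₄ - 2 - 2 * c₃)]

lemma exists_bad_sample_large_deviation {d N : ℕ} {X : Matrix (Fin d) (Fin N) ℝ} {μs : Fin d → ℝ}
    {G B : Finset (Fin N)} {ε c₁ c₂ c₄ : ℝ} (hGB : Disjoint G B) (hGBu : G ∪ B = univ)
    (hBcard : (B.card : ℝ) = ε * N) (hε : 0 < ε) (hε₀ : ε ≤ 1 / 100) (hc₁ : 1 ≤ c₁)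
    (hc₂ : 1 ≤ c₂) (hc₄ : 50 * c₁ ≤ c₄) {w : Fin N → ℝ} (hw : w ∈ deltaSet N (2 * ε))
    (hconc : specNorm ((∑ i ∈ G, w i • vecMulVec (Xᵀ i - μs) (Xᵀ i - μs)) - 1) ≤
      c₁ * ε * Real.log (1 / ε))
    {u : Fin d → ℝ} (hu : vnorm u = 1) (hspec : u ⬝ᵥ covW X w *ᵥ u = specNorm (covW X w))
    (hr : c₂ * ε * √(Real.log (1 / ε)) ≤ vnorm (muW X w - μs))
    (hlam : 1 + c₄ * vnorm (muW X w - μs) ^ 2 / ε ≤ lambdaMax (covW X w)) :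
    ∃ i ∈ B, 0 < w i ∧
      9 / 10 * c₄ * (vnorm (muW X w - μs) ^ 2 / ε ^ 2) < (Xᵀ i ⬝ᵥ u - u ⬝ᵥ μs) ^ 2 := by
  set r := vnorm (muW X w - μs)
  set L := Real.log (1 / ε)
  have hL : 0 < L := Real.log_pos (by rw [lt_div_iff₀ hε]; linarith)
  have hr₀ : 0 < r := (by positivity : 0 < c₂ * ε * √L).trans_le hr
  have hεL : ε * L ≤ r ^ 2 / ε := by
    rw [le_div_iff₀ hε]
    nlinarith [sq_mul_le_sq_of_mul_mul_sqrt_le hc₂ hε.le hL.le hr]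
  have hN : (0 : ℝ) < N := by
    rcases N.eq_zero_or_pos with rfl | hN
    · simp [deltaSet] at hw
    · exact_mod_cast hN
  have hWB : ∑ i ∈ B, w i ≤ 50 / 49 * ε := by
    refine (sum_le_card_mul_of_mem_deltaSet hw B).trans ?_
    rw [hBcard, mul_one_div, div_le_iff₀ (by nlinarith)]
    nlinarith
  have hbad := (hlam.trans ((lambdaMax_le_specNorm _).trans_eq hspec.symm)).trans
    (dotProduct_covW_mulVec_le_add_sum hGB hGBu hw.1 hu hconc)
  refine exists_pos_lt_of_sum_mul_lt (fun i _ => (hw.2 i).1) ?_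
  calc (∑ i ∈ B, w i) * (9 / 10 * c₄ * (r ^ 2 / ε ^ 2))
      ≤ 50 / 49 * ε * (9 / 10 * c₄ * (r ^ 2 / ε ^ 2)) := by
        have : 0 < c₄ := by linarith
        gcongr
    _ = 45 / 49 * c₄ * (r ^ 2 / ε) := by field_simp; ring
    _ < c₄ * (r ^ 2 / ε) - c₁ * (ε * L) := by
        nlinarith [mul_le_mul_of_nonneg_left hεL (by linarith : 0 ≤ c₁),
          (by positivity : 0 < r ^ 2 / ε)]
    _ ≤ ∑ i ∈ B, w i * (Xᵀ i ⬝ᵥ u - u ⬝ᵥ μs) ^ 2 := by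
        rw [mul_div_assoc] at hbad; linarith

/-- at a bad (far-from-true-mean) weight vector there is a bad sample with
large gradient coordinate. -/
theorem stmt_1 : ∃ ε₀ : ℝ, 0 < ε₀ ∧
    ∀ (d N : ℕ) (X : Matrix (Fin d) (Fin N) ℝ) (μs : Fin d → ℝ)
      (G B : Finset (Fin N)) (ε c₁ c₂ c₃ c₄ : ℝ),
    Disjoint G B → G ∪ B = Finset.univ →
    (G.card : ℝ) = (1 - ε) * N → (B.card : ℝ) = ε * N →
    0 < ε → ε ≤ ε₀ →
    1 ≤ c₁ → 1 ≤ c₂ → 5 * c₁ ≤ c₃ → max 100 (max (6 * c₃) (50 * c₁)) ≤ c₄ →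
    (∀ v ∈ deltaSet N (2 * ε),
      specNorm ((∑ i ∈ G, v i • Matrix.vecMulVec (Xᵀ i - μs) (Xᵀ i - μs)) - 1) ≤
        c₁ * ε * Real.log (1 / ε)) →
    ∀ w ∈ deltaSet N (2 * ε), ∀ u : Fin d → ℝ, vnorm u = 1 →
    u ⬝ᵥ (covW X w).mulVec u = specNorm (covW X w) →
    c₂ * ε * Real.sqrt (Real.log (1 / ε)) ≤ vnorm (muW X w - μs) →
    1 + c₄ * vnorm (muW X w - μs) ^ 2 / ε ≤ lambdaMax (covW X w) →
    ∃ i ∈ B, 0 < w i ∧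
      2 * c₃ * vnorm (muW X w - μs) ^ 2 / ε ^ 2 <
        gradFw X w u i - (u ⬝ᵥ μs) * (u ⬝ᵥ (μs - (2 : ℝ) • muW X w)) := by
  refine ⟨1 / 100, by norm_num, ?_⟩
  intro d N X μs G B ε c₁ c₂ c₃ c₄ hGB hGBu _ hBcard hε hε₀ hc₁ hc₂ _ hc₄ hconc w hw u hu
    hspec hr hlam
  obtain ⟨hc₄₁, hc₄₃, hc₄₅⟩ : 100 ≤ c₄ ∧ 6 * c₃ ≤ c₄ ∧ 50 * c₁ ≤ c₄ := by
    simpa only [max_le_iff] using hc₄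
  obtain ⟨i, hiB, hwi, hi⟩ := exists_bad_sample_large_deviation hGB hGBu hBcard hε hε₀ hc₁ hc₂ hc₄₅ hw
    (hconc w hw) hu hspec hr hlam
  refine ⟨i, hiB, hwi, ?_⟩
  have hmean : (u ⬝ᵥ (muW X w - μs)) ^ 2 ≤ vnorm (muW X w - μs) ^ 2 := by
    have := pow_le_pow_left₀ (abs_nonneg _) (abs_dotProduct_le_vnorm_mul u (muW X w - μs)) 2
    rwa [sq_abs, hu, one_mul] at this
  have hε1 : vnorm (muW X w - μs) ^ 2 ≤ vnorm (muW X w - μs) ^ 2 / ε ^ 2 :=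
    le_div_self (sq_nonneg _) (by positivity) (by nlinarith)
  rw [gradFw_sub_eq, mul_div_assoc]
  exact two_mul_lt_sq_sub_two_mul hi hmean hε1 hc₄₁ hc₄₃
end

section
/- Let Z ∈ ℝ^{n×n} be symmetric and ρ > 0. For every symmetric positive definite Y ∈ ℝ^{n×n} with tr(Y) = 1, tr(YZ) − (1/ρ)·tr(Y·log Y) ≤ (1/ρ)·ln tr(exp(ρZ)), where log Y denotes the matrix logarithm of the positive definite matrix Y (obtained by applying the real logarithm to its eigenvalues via the spectral theorem). Moreover, equality holds for Y = exp(ρZ)/tr(exp(ρZ)). -/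
/-!
Diagonalize `Y = U diag(p) Uᵀ` and put `bᵢ = (Uᵀ A U)ᵢᵢ`. Then
`tr (Y A) - tr (Y log Y) = ∑ pᵢ (bᵢ - log pᵢ)`, which Jensen's inequality for `exp` bounds
by `log ∑ exp bᵢ`, and Peierls' inequality `exp bᵢ ≤ (Uᵀ exp(A) U)ᵢᵢ` bounds this in turn
by `log tr exp A`. The Gibbs state `exp A / tr exp A` equals `exp (A - log (tr exp A))`, so its
logarithm is explicit and attains the bound. The theorem is the case `A = ρ Z`, divided by `ρ`.
-/

open Matrix Finset RealInnerProductSpace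

attribute [local instance] Matrix.instL2OpNormedRing Matrix.instL2OpNormedAlgebra

namespace Matrix

variable {ι : Type*} [Fintype ι] [DecidableEq ι]

lemma mul_diagonal_mul_star_apply_self (W : Matrix ι ι ℝ) (c : ι → ℝ) (i : ι) :
    (W * diagonal c * star W) i i = ∑ j, W i j ^ 2 * c j := by
  simp [mul_apply, diagonal_apply, sq, mul_comm, mul_left_comm]

lemma exp_add_smul_one (A : Matrix ι ι ℝ) (c : ℝ) :
    NormedSpace.exp (A + c • 1) = Real.exp c • NormedSpace.exp A := by
  rw [← Algebra.algebraMap_eq_smul_one,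
    Matrix.exp_add_of_commute _ _ (Algebra.commute_algebraMap_right c A),
    ← NormedSpace.algebraMap_exp_comm, ← Real.exp_eq_exp_ℝ, Algebra.algebraMap_eq_smul_one,
    mul_smul_comm, mul_one]

namespace IsHermitian

variable {A : Matrix ι ι ℝ} (hA : A.IsHermitian)
include hA

lemma cfc_id_eq : hA.cfc id = A :=
  (hA.cfc_eq id).symm.trans (cfc_id ℝ A hA.isSelfAdjoint)

lemma exp_eq_cfc : NormedSpace.exp A = hA.cfc Real.exp :=
  (CFC.real_exp_eq_normedSpace_exp hA.isSelfAdjoint).symm.trans (hA.cfc_eq _)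

lemma cfc_eq_conj_diagonal (f : ℝ → ℝ) :
    hA.cfc f = (hA.eigenvectorUnitary : Matrix ι ι ℝ) * diagonal (f ∘ hA.eigenvalues) *
      star (hA.eigenvectorUnitary : Matrix ι ι ℝ) :=
  rfl

lemma star_mul_cfc_mul (f : ℝ → ℝ) :
    star (hA.eigenvectorUnitary : Matrix ι ι ℝ) * hA.cfc f * hA.eigenvectorUnitary =
      diagonal (f ∘ hA.eigenvalues) := by
  have hU := Unitary.star_mul_self_of_mem hA.eigenvectorUnitary.2
  rw [cfc_eq_conj_diagonal, Matrix.mul_assoc, Matrix.mul_assoc, hU, Matrix.mul_one,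
    ← Matrix.mul_assoc, hU, Matrix.one_mul]

lemma trace_cfc_mul (f : ℝ → ℝ) (M : Matrix ι ι ℝ) :
    (hA.cfc f * M).trace = ∑ i, f (hA.eigenvalues i) *
      (star (hA.eigenvectorUnitary : Matrix ι ι ℝ) * M * hA.eigenvectorUnitary) i i := by
  rw [cfc_eq_conj_diagonal, Matrix.mul_assoc, Matrix.mul_assoc, trace_mul_comm, Matrix.mul_assoc]
  simp [trace, diagonal_mul]

lemma trace_cfc (f : ℝ → ℝ) : (hA.cfc f).trace = ∑ i, f (hA.eigenvalues i) := by
  simpa using hA.trace_cfc_mul f 1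

/-- Peierls' inequality. -/
lemma convexOn_conj_diag_le {f : ℝ → ℝ} (hf : ConvexOn ℝ Set.univ f) {V : Matrix ι ι ℝ}
    (hV : V ∈ unitary (Matrix ι ι ℝ)) (i : ι) :
    f ((star V * A * V) i i) ≤ (star V * hA.cfc f * V) i i := by
  set W := star V * (hA.eigenvectorUnitary : Matrix ι ι ℝ)
  have hconj (g : ℝ → ℝ) :
      star V * hA.cfc g * V = W * diagonal (g ∘ hA.eigenvalues) * star W := by
    simp only [W, cfc_eq_conj_diagonal, star_mul, star_star, Matrix.mul_assoc]
  have hW : ∑ j, W i j ^ 2 = 1 := by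
    have hWW : W * star W = 1 := by
      simp only [W, star_mul, star_star, Matrix.mul_assoc]
      rw [← Matrix.mul_assoc (hA.eigenvectorUnitary : Matrix ι ι ℝ),
        Unitary.mul_star_self_of_mem hA.eigenvectorUnitary.2, Matrix.one_mul,
        Unitary.star_mul_self_of_mem hV]
    simpa [mul_apply, sq] using congrFun (congrFun hWW i) i
  have hA' := hconj id
  rw [hA.cfc_id_eq] at hA'
  rw [hA', hconj, mul_diagonal_mul_star_apply_self, mul_diagonal_mul_star_apply_self]
  simpa using hf.map_sum_le (t := .univ) (w := fun j => W i j ^ 2) (p := hA.eigenvalues)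
    (fun j _ => sq_nonneg _) hW (fun j _ => Set.mem_univ _)

lemma sum_convexOn_conj_diag_le_trace_cfc {f : ℝ → ℝ} (hf : ConvexOn ℝ Set.univ f)
    {V : Matrix ι ι ℝ} (hV : V ∈ unitary (Matrix ι ι ℝ)) :
    ∑ i, f ((star V * A * V) i i) ≤ (hA.cfc f).trace := calc
  ∑ i, f ((star V * A * V) i i) ≤ (star V * hA.cfc f * V).trace :=
    Finset.sum_le_sum fun i _ => hA.convexOn_conj_diag_le hf hV i
  _ = (hA.cfc f).trace := by
    rw [trace_mul_cycle, Unitary.mul_star_self_of_mem hV, Matrix.one_mul]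

lemma trace_exp_pos [Nonempty ι] : 0 < (NormedSpace.exp A).trace := by
  rw [hA.exp_eq_cfc, hA.trace_cfc]
  exact Finset.sum_pos (fun i _ => Real.exp_pos _) Finset.univ_nonempty

end IsHermitian

end Matrix

lemma Real.sum_mul_sub_log_le_log_sum_exp {ι : Type*} [Fintype ι] {p : ι → ℝ}
    (hp : ∀ i, 0 < p i) (hp_sum : ∑ i, p i = 1) (b : ι → ℝ) :
    ∑ i, p i * (b i - Real.log (p i)) ≤ Real.log (∑ i, Real.exp (b i)) := by
  have hne : (Finset.univ : Finset ι).Nonempty :=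
    Finset.nonempty_of_sum_ne_zero (hp_sum ▸ one_ne_zero)
  rw [Real.le_log_iff_exp_le (Finset.sum_pos (fun i _ => Real.exp_pos _) hne)]
  calc Real.exp (∑ i, p i * (b i - Real.log (p i)))
      ≤ ∑ i, p i * Real.exp (b i - Real.log (p i)) := by
        simpa using convexOn_exp.map_sum_le (t := .univ) (w := p)
          (p := fun i => b i - Real.log (p i)) (fun i _ => (hp i).le) hp_sum
          (fun i _ => Set.mem_univ _)
    _ = ∑ i, Real.exp (b i) := by
        refine Finset.sum_congr rfl fun i _ => ?_
        rw [Real.exp_sub, Real.exp_log (hp i), mul_div_cancel₀ _ (hp i).ne']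

lemma matLog_eq_cfc {n : ℕ} {Y : Matrix (Fin n) (Fin n) ℝ} (hY : Y.IsHermitian) :
    matLog Y = hY.cfc Real.log :=
  dif_pos hY

lemma matLog_exp {n : ℕ} {A : Matrix (Fin n) (Fin n) ℝ} (hA : A.IsHermitian) :
    matLog (NormedSpace.exp A) = A := by
  rw [matLog_eq_cfc hA.exp, ← IsHermitian.cfc_eq]
  exact CFC.log_exp A hA.isSelfAdjoint

lemma trace_mul_matLog {n : ℕ} {Y : Matrix (Fin n) (Fin n) ℝ} (hY : Y.IsHermitian) :
    (Y * matLog Y).trace = ∑ i, hY.eigenvalues i * Real.log (hY.eigenvalues i) := by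
  have h := hY.trace_cfc_mul id (matLog Y)
  rw [hY.cfc_id_eq] at h
  rw [h, matLog_eq_cfc hY, hY.star_mul_cfc_mul]
  simp

theorem trace_mul_sub_trace_mul_matLog_le_log_trace_exp {n : ℕ}
    {A Y : Matrix (Fin n) (Fin n) ℝ} (hA : A.IsHermitian) (hY : Y.PosDef) (htr : Y.trace = 1) :
    (Y * A).trace - (Y * matLog Y).trace ≤ Real.log (NormedSpace.exp A).trace := by
  set U := hY.isHermitian.eigenvectorUnitary
  set p := hY.isHermitian.eigenvalues
  set b := fun i => (star (U : Matrix (Fin n) (Fin n) ℝ) * A * U) i i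
  have hp_sum : ∑ i, p i = 1 := by simpa [hY.isHermitian.trace_eq_sum_eigenvalues] using htr
  have hYA : (Y * A).trace = ∑ i, p i * b i := by
    simpa [hY.isHermitian.cfc_id_eq] using hY.isHermitian.trace_cfc_mul id A
  have hYlogY : (Y * matLog Y).trace = ∑ i, p i * Real.log (p i) :=
    trace_mul_matLog hY.isHermitian
  have hne : (Finset.univ : Finset (Fin n)).Nonempty :=
    Finset.nonempty_of_sum_ne_zero (hp_sum ▸ one_ne_zero)
  calc (Y * A).trace - (Y * matLog Y).trace = ∑ i, p i * (b i - Real.log (p i)) := by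
        rw [hYA, hYlogY, ← Finset.sum_sub_distrib]
        simp only [mul_sub]
    _ ≤ Real.log (∑ i, Real.exp (b i)) :=
        Real.sum_mul_sub_log_le_log_sum_exp hY.eigenvalues_pos hp_sum b
    _ ≤ Real.log (NormedSpace.exp A).trace := by
        refine Real.log_le_log (Finset.sum_pos (fun i _ => Real.exp_pos _) hne) ?_
        rw [hA.exp_eq_cfc]
        exact hA.sum_convexOn_conj_diag_le_trace_cfc convexOn_exp U.2

noncomputable def gibbsState {ι : Type*} [Fintype ι] [DecidableEq ι] (A : Matrix ι ι ℝ) :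
    Matrix ι ι ℝ :=
  (NormedSpace.exp A).trace⁻¹ • NormedSpace.exp A

theorem trace_gibbsState_mul_sub_trace_mul_matLog_eq_log_trace_exp {n : ℕ} [NeZero n]
    {A : Matrix (Fin n) (Fin n) ℝ} (hA : A.IsHermitian) :
    (gibbsState A * A).trace - (gibbsState A * matLog (gibbsState A)).trace =
      Real.log (NormedSpace.exp A).trace := by
  set t := (NormedSpace.exp A).trace
  have ht : 0 < t := hA.trace_exp_pos
  have htr : (gibbsState A).trace = 1 := by
    rw [gibbsState, trace_smul, smul_eq_mul, inv_mul_cancel₀ ht.ne']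
  have hlog : matLog (gibbsState A) = A + (-Real.log t) • 1 := by
    rw [← matLog_exp (hA.add (isHermitian_one.smul (IsSelfAdjoint.all _))), exp_add_smul_one,
      Real.exp_neg, Real.exp_log ht]
    rfl
  rw [hlog, Matrix.mul_add, trace_add, mul_smul_comm, Matrix.mul_one, trace_smul, htr]
  simp

/-- duality (Gibbs variational principle) for the matrix softmax. -/
theorem stmt_8 {n : ℕ} (Z : Matrix (Fin n) (Fin n) ℝ) (hZ : Z.IsHermitian)
    (ρ : ℝ) (hρ : 0 < ρ) :
    (∀ Y : Matrix (Fin n) (Fin n) ℝ, Y.PosDef → Y.trace = 1 →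
      (Y * Z).trace - (1 / ρ) * (Y * matLog Y).trace ≤
        (1 / ρ) * Real.log (NormedSpace.exp (ρ • Z)).trace) ∧
    (((((NormedSpace.exp (ρ • Z)).trace)⁻¹ • NormedSpace.exp (ρ • Z)) * Z).trace -
        (1 / ρ) * (((((NormedSpace.exp (ρ • Z)).trace)⁻¹ • NormedSpace.exp (ρ • Z)) *
          matLog (((NormedSpace.exp (ρ • Z)).trace)⁻¹ • NormedSpace.exp (ρ • Z))).trace) =
      (1 / ρ) * Real.log (NormedSpace.exp (ρ • Z)).trace) := by
  have hρZ : (ρ • Z).IsHermitian := hZ.smul (IsSelfAdjoint.all ρ)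
  have hscale (Y L : Matrix (Fin n) (Fin n) ℝ) : (Y * Z).trace - (1 / ρ) * (Y * L).trace =
      (1 / ρ) * ((Y * (ρ • Z)).trace - (Y * L).trace) := by
    rw [Matrix.mul_smul, trace_smul, smul_eq_mul]
    field_simp
  refine ⟨fun Y hY htr => ?_, ?_⟩
  · rw [hscale]
    exact mul_le_mul_of_nonneg_left (trace_mul_sub_trace_mul_matLog_le_log_trace_exp hρZ hY htr)
      (by positivity)
  · obtain rfl | hn := eq_or_ne n 0
    · simp [trace]
    have : NeZero n := ⟨hn⟩
    rw [hscale]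
    exact congrArg _ (trace_gibbsState_mul_sub_trace_mul_matLog_eq_log_trace_exp hρZ)
end

section
/- Let X : ℝ → ℝ^{n×n} be a function taking symmetric-matrix values that is differentiable at a point t with derivative X'(t). Then the map s ↦ exp(X(s)) is differentiable at t, with derivative ∫₀¹ exp(α·X(t)) · X'(t) · exp((1−α)·X(t)) dα, where the integral is an ℝ^{n×n}-valued integral over α ∈ [0,1] and exp denotes the matrix exponential. -/
/-!
Duhamel's formula `exp P - exp Q = ∫₀¹ exp (α P) (P - Q) exp ((1 - α) Q) dα` is the fundamental
theorem of calculus for `α ↦ exp (α P) exp ((1 - α) Q)`. Applied to `P = A + H`, `Q = A` it writes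
the remainder `exp (A + H) - exp A - L_A H` as `∫₀¹ (exp (α (A + H)) - exp (α A)) H exp ((1 - α) A)`,
and applied once more inside the integral it bounds this remainder by `O(‖H‖²)`. So `exp` is
Fréchet differentiable with derivative `L_A H = ∫₀¹ exp (α A) H exp ((1 - α) A) dα` in any
complete normed algebra, and the chain rule handles the curve `X`.
-/

open Matrix Finset RealInnerProductSpace

open NormedSpace Asymptotics

section NormedAlgebra

theorem norm_smul_le_of_mem_Icc {E : Type*} [SeminormedAddCommGroup E] [NormedSpace ℝ E] {a : ℝ}
    (ha : a ∈ Set.Icc (0:ℝ) 1) (x : E) : ‖a • x‖ ≤ ‖x‖ := by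
  rw [norm_smul, Real.norm_of_nonneg ha.1]
  exact mul_le_of_le_one_left (norm_nonneg x) ha.2

theorem norm_intervalIntegral_zero_one_le {E : Type*} [NormedAddCommGroup E] [NormedSpace ℝ E]
    {f : ℝ → E} {C : ℝ} (h : ∀ α ∈ Set.Icc (0:ℝ) 1, ‖f α‖ ≤ C) :
    ‖∫ α in (0:ℝ)..1, f α‖ ≤ C := by
  refine (intervalIntegral.norm_integral_le_of_norm_le_const fun α hα =>
    h α (Set.Ioc_subset_Icc_self ?_)).trans_eq (by simp)
  rwa [Set.uIoc_of_le zero_le_one] at hα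

variable {𝔸 : Type*} [NormedRing 𝔸] [NormedAlgebra ℝ 𝔸]

theorem norm_exp_le_exp_norm [NormOneClass 𝔸] (x : 𝔸) : ‖exp x‖ ≤ Real.exp ‖x‖ := by
  rw [exp_eq_tsum ℝ, Real.exp_eq_exp_ℝ, exp_eq_tsum ℝ]
  refine (norm_tsum_le_tsum_norm (norm_expSeries_summable' x)).trans ?_
  refine Summable.tsum_le_tsum (fun n => ?_) (norm_expSeries_summable' x)
    (expSeries_summable' (𝕂 := ℝ) ‖x‖)
  rw [norm_smul, smul_eq_mul, norm_inv, Real.norm_natCast]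
  gcongr
  exact norm_pow_le x n

theorem norm_exp_smul_le [NormOneClass 𝔸] {a : ℝ} (ha : a ∈ Set.Icc (0:ℝ) 1) (x : 𝔸) :
    ‖exp (a • x)‖ ≤ Real.exp ‖x‖ :=
  (norm_exp_le_exp_norm _).trans (Real.exp_le_exp.2 (norm_smul_le_of_mem_Icc ha x))

variable [CompleteSpace 𝔸]

theorem continuous_exp_smul {f : ℝ → ℝ} (hf : Continuous f) (x : 𝔸) :
    Continuous fun α => exp (f α • x) :=
  (continuous_iff_continuousAt.2 fun y => (exp_analytic (𝕂 := ℝ) y).continuousAt).comp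
    (hf.smul continuous_const)

theorem continuous_exp_smul_mul_mul_exp_smul (P Q H : 𝔸) :
    Continuous fun α : ℝ => exp (α • P) * H * exp ((1 - α) • Q) :=
  ((continuous_exp_smul continuous_id P).mul continuous_const).mul
    (continuous_exp_smul (continuous_const.sub continuous_id) Q)

theorem exp_sub_exp_eq_integral (P Q : 𝔸) :
    exp P - exp Q = ∫ α in (0:ℝ)..1, exp (α • P) * (P - Q) * exp ((1 - α) • Q) := by
  have hderiv (a : ℝ) : HasDerivAt (fun α : ℝ => exp (α • P) * exp ((1 - α) • Q))
      (exp (a • P) * (P - Q) * exp ((1 - a) • Q)) a := by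
    have hQ : HasDerivAt (fun α : ℝ => exp ((1 - α) • Q)) (-(Q * exp ((1 - a) • Q))) a := by
      simpa [Function.comp_def] using
        (hasDerivAt_exp_smul_const' (𝕂 := ℝ) Q (1 - a)).scomp a ((hasDerivAt_id a).const_sub 1)
    refine ((hasDerivAt_exp_smul_const (𝕂 := ℝ) P a).mul hQ).congr_deriv ?_
    rw [mul_neg, ← mul_assoc, ← sub_eq_add_neg, ← sub_mul, ← mul_sub]
  rw [intervalIntegral.integral_eq_sub_of_hasDerivAt (fun a _ => hderiv a)
    ((continuous_exp_smul_mul_mul_exp_smul P Q _).intervalIntegrable 0 1)]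
  simp

noncomputable def expFDeriv (A : 𝔸) : 𝔸 →L[ℝ] 𝔸 :=
  ∫ α in (0:ℝ)..1, ContinuousLinearMap.mulLeftRight ℝ 𝔸 (exp (α • A)) (exp ((1 - α) • A))

theorem expFDeriv_apply (A H : 𝔸) :
    expFDeriv A H = ∫ α in (0:ℝ)..1, exp (α • A) * H * exp ((1 - α) • A) := by
  rw [expFDeriv, ContinuousLinearMap.intervalIntegral_apply]
  · rfl
  · exact ((ContinuousLinearMap.mulLeftRight ℝ 𝔸).continuous₂.comp₂
      (continuous_exp_smul continuous_id A)
      (continuous_exp_smul (continuous_const.sub continuous_id) A)).intervalIntegrable 0 1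

variable [NormOneClass 𝔸]

theorem norm_exp_sub_exp_le (P Q : 𝔸) :
    ‖exp P - exp Q‖ ≤ Real.exp ‖P‖ * ‖P - Q‖ * Real.exp ‖Q‖ := by
  rw [exp_sub_exp_eq_integral]
  refine norm_intervalIntegral_zero_one_le fun α hα => (norm_mul₃_le ..).trans ?_
  gcongr
  exacts [norm_exp_smul_le hα P, norm_exp_smul_le (Set.Icc.mem_iff_one_sub_mem.1 hα) Q]

theorem norm_exp_add_sub_exp_sub_expFDeriv_le (A H : 𝔸) :
    ‖exp (A + H) - exp A - expFDeriv A H‖ ≤ Real.exp (3 * ‖A‖ + ‖H‖) * ‖H‖ ^ 2 := by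
  have hint (B : 𝔸) : IntervalIntegrable (fun α : ℝ => exp (α • B) * H * exp ((1 - α) • A))
      MeasureTheory.volume 0 1 :=
    (continuous_exp_smul_mul_mul_exp_smul B A H).intervalIntegrable 0 1
  rw [exp_sub_exp_eq_integral, add_sub_cancel_left, expFDeriv_apply,
    ← intervalIntegral.integral_sub (hint _) (hint _)]
  refine norm_intervalIntegral_zero_one_le fun α hα => ?_
  have hdiff : ‖exp (α • (A + H)) - exp (α • A)‖ ≤ Real.exp (‖A‖ + ‖H‖) * ‖H‖ * Real.exp ‖A‖ := by
    refine (norm_exp_sub_exp_le _ _).trans ?_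
    rw [← smul_sub, add_sub_cancel_left]
    gcongr
    · exact (norm_smul_le_of_mem_Icc hα _).trans (norm_add_le A H)
    · exact norm_smul_le_of_mem_Icc hα H
    · exact norm_smul_le_of_mem_Icc hα A
  rw [← sub_mul, ← sub_mul]
  calc ‖(exp (α • (A + H)) - exp (α • A)) * H * exp ((1 - α) • A)‖
      ≤ Real.exp (‖A‖ + ‖H‖) * ‖H‖ * Real.exp ‖A‖ * ‖H‖ * Real.exp ‖A‖ := by
        refine (norm_mul₃_le ..).trans ?_
        gcongr
        exact norm_exp_smul_le (Set.Icc.mem_iff_one_sub_mem.1 hα) A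
    _ = Real.exp (3 * ‖A‖ + ‖H‖) * ‖H‖ ^ 2 := by
        rw [show 3 * ‖A‖ + ‖H‖ = ‖A‖ + ‖H‖ + ‖A‖ + ‖A‖ by ring]
        simp only [Real.exp_add]
        ring

theorem hasFDerivAt_exp_expFDeriv (A : 𝔸) : HasFDerivAt exp (expFDeriv A) A := by
  rw [hasFDerivAt_iff_isLittleO_nhds_zero]
  refine IsBigO.trans_isLittleO (g := fun H : 𝔸 => ‖H‖ ^ 2) ?_ (isLittleO_norm_pow_id one_lt_two)
  refine IsBigO.of_bound (Real.exp (3 * ‖A‖ + 1)) ?_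
  filter_upwards [Metric.closedBall_mem_nhds (0 : 𝔸) zero_lt_one] with H hH
  rw [mem_closedBall_zero_iff] at hH
  refine (norm_exp_add_sub_exp_sub_expFDeriv_le A H).trans ?_
  rw [Real.norm_of_nonneg (by positivity)]
  gcongr

theorem HasDerivAt.normedSpace_exp {X : ℝ → 𝔸} {X' : 𝔸} {t : ℝ} (hX : HasDerivAt X X' t) :
    HasDerivAt (fun s => NormedSpace.exp (X s))
      (∫ α in (0:ℝ)..1,
        NormedSpace.exp (α • X t) * X' * NormedSpace.exp ((1 - α) • X t)) t := by
  rw [← expFDeriv_apply]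
  exact (hasFDerivAt_exp_expFDeriv (X t)).comp_hasDerivAt t hX

end NormedAlgebra

namespace Matrix

/-- `HasDerivAt` only sees the topology, but the integral is built from the norm. This transports
the derivative computed with the submultiplicative `ℓ∞`-operator norm to the entrywise sup norm. -/
theorem intervalIntegral_linftyOp_eq {m n : Type*} [Fintype m] [Fintype n]
    (f : ℝ → Matrix m n ℝ) (a b : ℝ) (μ : MeasureTheory.Measure ℝ) :
    @intervalIntegral _ Matrix.linftyOpNormedAddCommGroup Matrix.linftyOpNormedSpace f a b μ =
      @intervalIntegral _ Matrix.normedAddCommGroup Matrix.normedSpace f a b μ := by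
  have h (ν : MeasureTheory.Measure ℝ) :=
    @ContinuousLinearEquiv.integral_comp_comm ℝ (Matrix m n ℝ) (Matrix m n ℝ) _ ν ℝ _
      Matrix.normedAddCommGroup Matrix.normedSpace
      Matrix.linftyOpNormedAddCommGroup Matrix.linftyOpNormedSpace Matrix.linftyOpNormedSpace
      Matrix.normedSpace
      { LinearEquiv.refl ℝ _ with continuous_toFun := continuous_id,
                                  continuous_invFun := continuous_id } f
  exact congrArg₂ (· - ·) (h _) (h _)

section LinftyOp

attribute [local instance] Matrix.linftyOpNormedRing Matrix.linftyOpNormedAlgebra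

theorem hasDerivAt_exp_linftyOp {m : Type*} [Fintype m] [DecidableEq m] [Nonempty m]
    {X : ℝ → Matrix m m ℝ} {X' : Matrix m m ℝ} {t : ℝ} (hX : HasDerivAt X X' t) :
    HasDerivAt (fun s => exp (X s))
      (∫ α in (0:ℝ)..1, exp (α • X t) * X' * exp ((1 - α) • X t)) t :=
  hX.normedSpace_exp

end LinftyOp

end Matrix

attribute [local instance] Matrix.normedAddCommGroup Matrix.normedSpace

theorem Matrix.hasDerivAt_exp {m : Type*} [Fintype m] [DecidableEq m]
    {X : ℝ → Matrix m m ℝ} {X' : Matrix m m ℝ} {t : ℝ} (hX : HasDerivAt X X' t) :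
    HasDerivAt (fun s => exp (X s))
      (∫ α in (0:ℝ)..1, exp (α • X t) * X' * exp ((1 - α) • X t)) t := by
  -- the `ℓ∞`-operator norm satisfies `‖1‖ = 1` only when `m` is nonempty
  cases isEmpty_or_nonempty m
  · exact (hasDerivAt_const t 0).congr_deriv (Subsingleton.elim _ _) |>.congr_of_eventuallyEq
      (.of_forall fun _ => Subsingleton.elim _ _)
  rw [← intervalIntegral_linftyOp_eq]
  exact hasDerivAt_exp_linftyOp hX

theorem stmt_10_general {n : ℕ} (X : ℝ → Matrix (Fin n) (Fin n) ℝ)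
    (X' : Matrix (Fin n) (Fin n) ℝ) (t : ℝ)
    (hd : HasDerivAt X X' t) :
    HasDerivAt (fun s => NormedSpace.exp (X s))
      (∫ α in (0:ℝ)..1,
        NormedSpace.exp (α • X t) * X' * NormedSpace.exp ((1 - α) • X t)) t :=
  Matrix.hasDerivAt_exp hd

/-- derivative of the matrix exponential along a curve of symmetric
matrices. -/
theorem stmt_10 {n : ℕ} (X : ℝ → Matrix (Fin n) (Fin n) ℝ)
    (X' : Matrix (Fin n) (Fin n) ℝ) (t : ℝ)
    (hsym : ∀ s, (X s).IsHermitian) (hd : HasDerivAt X X' t) :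
    HasDerivAt (fun s => NormedSpace.exp (X s))
      (∫ α in (0:ℝ)..1,
        NormedSpace.exp (α • X t) * X' * NormedSpace.exp ((1 - α) • X t)) t :=
  stmt_10_general X X' t hd
end

section
/- Let 0 < ε < 1/2, δ > 0, and w ∈ Δ_{N,2ε}. Set S₋ = {i : w_i > 0} and S₊ = {i : w_i < 1/((1−2ε)N)}. If w is a δ-stationary point of the softmax objective f on Δ_{N,2ε}, then ∇f(w)_i ≤ ∇f(w)_j + √2·δ for all i ∈ S₋ and j ∈ S₊. -/
open Matrix Finset RealInnerProductSpace

/-!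
Moving mass `t` from a coordinate `i` with `w i > 0` to a coordinate `j` below the cap keeps
`w` in `Δ_{N,2ε}` for small `t > 0`. The direction `e_j - e_i` has length `√2`, and the
gradient pairs with it to `∇f(w)_j - ∇f(w)_i`, so `δ`-stationarity along the unit vector
`(e_j - e_i)/√2` is exactly the claimed inequality.
-/

section Transfer

variable {N : ℕ}

lemma vnorm_eq_sqrt_dotProduct (v : Fin N → ℝ) : vnorm v = Real.sqrt (v ⬝ᵥ v) := by
  simp only [vnorm, dotProduct, sq]

lemma vnorm_smul (c : ℝ) (v : Fin N → ℝ) : vnorm (c • v) = |c| * vnorm v := by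
  rw [vnorm_eq_sqrt_dotProduct, vnorm_eq_sqrt_dotProduct, smul_dotProduct, dotProduct_smul,
    smul_eq_mul, smul_eq_mul, ← mul_assoc, ← sq, Real.sqrt_mul (sq_nonneg c), Real.sqrt_sq_eq_abs]

lemma single_sub_single_dotProduct (i j : Fin N) (g : Fin N → ℝ) :
    (Pi.single j 1 - Pi.single i 1) ⬝ᵥ g = g j - g i := by
  simp only [sub_dotProduct, single_dotProduct, one_mul]

lemma vnorm_single_sub_single {i j : Fin N} (hij : i ≠ j) :
    vnorm (Pi.single j 1 - Pi.single i 1 : Fin N → ℝ) = Real.sqrt 2 := by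
  rw [vnorm_eq_sqrt_dotProduct, single_sub_single_dotProduct]
  norm_num [hij, hij.symm]

lemma sum_single_sub_single (i j : Fin N) :
    ∑ k, (Pi.single j 1 - Pi.single i 1 : Fin N → ℝ) k = 0 := by
  simp [Finset.sum_sub_distrib]

lemma exists_pos_add_smul_single_sub_single_mem_deltaSet {ε : ℝ} {w : Fin N → ℝ}
    (hw : w ∈ deltaSet N ε) {i j : Fin N} (hij : i ≠ j) (hi : 0 < w i)
    (hj : w j < 1 / ((1 - ε) * N)) :
    ∃ t : ℝ, 0 < t ∧ w + t • (Pi.single j 1 - Pi.single i 1) ∈ deltaSet N ε := by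
  obtain ⟨hsum, hbounds⟩ := hw
  set cap := 1 / ((1 - ε) * (N : ℝ))
  have ht0 : 0 < min (w i) (cap - w j) := lt_min hi (sub_pos.mpr hj)
  have hti : min (w i) (cap - w j) ≤ w i := min_le_left _ _
  have htj : min (w i) (cap - w j) ≤ cap - w j := min_le_right _ _
  refine ⟨min (w i) (cap - w j), ht0, ?_, fun k => ?_⟩
  · simp only [Pi.add_apply, Pi.smul_apply, smul_eq_mul, Finset.sum_add_distrib,
      ← Finset.mul_sum, sum_single_sub_single, hsum, mul_zero, add_zero]
  · obtain ⟨hk0, hkcap⟩ := hbounds k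
    simp only [Pi.add_apply, Pi.smul_apply, Pi.sub_apply, smul_eq_mul, Pi.single_apply]
    split_ifs with hkj hki hki
    · exact absurd (hki.symm.trans hkj) hij
    · subst hkj; constructor <;> linarith
    · subst hki; constructor <;> linarith
    · simpa only [sub_self, mul_zero, add_zero] using hbounds k

end Transfer

theorem stmt_12_general {d N : ℕ} (X : Matrix (Fin d) (Fin N) ℝ) (ε δ : ℝ)
    (hδ : 0 < δ)
    (w : Fin N → ℝ) (hw : w ∈ deltaSet N (2 * ε))
    (hstat : ∀ u : Fin N → ℝ, vnorm u = 1 →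
      (∃ α : ℝ, 0 < α ∧ w + α • u ∈ deltaSet N (2 * ε)) →
      -δ ≤ u ⬝ᵥ gradSmax X (Real.log d / ε) w) :
    ∀ i j : Fin N, 0 < w i → w j < 1 / ((1 - 2 * ε) * N) →
      gradSmax X (Real.log d / ε) w i ≤ gradSmax X (Real.log d / ε) w j + Real.sqrt 2 * δ := by
  intro i j hi hj
  set g := gradSmax X (Real.log d / ε) w
  rcases eq_or_ne i j with rfl | hij
  · have : 0 ≤ Real.sqrt 2 * δ := by positivity
    linarith
  have hs2 : 0 < Real.sqrt 2 := by positivity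
  set v : Fin N → ℝ := Pi.single j 1 - Pi.single i 1
  obtain ⟨t, ht, hmem⟩ := exists_pos_add_smul_single_sub_single_mem_deltaSet hw hij hi hj
  have hunit : vnorm ((Real.sqrt 2)⁻¹ • v) = 1 := by
    rw [vnorm_smul, vnorm_single_sub_single hij, abs_of_pos (inv_pos.mpr hs2),
      inv_mul_cancel₀ hs2.ne']
  have hfeasible : w + (Real.sqrt 2 * t) • (Real.sqrt 2)⁻¹ • v ∈ deltaSet N (2 * ε) := by
    rwa [smul_smul, mul_right_comm, mul_inv_cancel₀ hs2.ne', one_mul]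
  have hdescent := hstat _ hunit ⟨_, by positivity, hfeasible⟩
  rw [smul_dotProduct, single_sub_single_dotProduct, smul_eq_mul, le_inv_mul_iff₀ hs2] at hdescent
  linarith

/-- bimodal sub-gradient property at `δ`-stationary points of the
softmax objective. -/
theorem stmt_12 {d N : ℕ} (X : Matrix (Fin d) (Fin N) ℝ) (ε δ : ℝ)
    (hε0 : 0 < ε) (hε1 : ε < 1 / 2) (hδ : 0 < δ)
    (w : Fin N → ℝ) (hw : w ∈ deltaSet N (2 * ε))
    (hstat : ∀ u : Fin N → ℝ, vnorm u = 1 →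
      (∃ α : ℝ, 0 < α ∧ w + α • u ∈ deltaSet N (2 * ε)) →
      -δ ≤ u ⬝ᵥ gradSmax X (Real.log d / ε) w) :
    ∀ i j : Fin N, 0 < w i → w j < 1 / ((1 - 2 * ε) * N) →
      gradSmax X (Real.log d / ε) w i ≤ gradSmax X (Real.log d / ε) w j + Real.sqrt 2 * δ :=
  stmt_12_general X ε δ hδ w hw hstat
end

section
/- Let K ⊆ ℝ^n be a nonempty closed convex set, δ > 0, B ≥ 0, β > 0, and let f : ℝ^n → ℝ be differentiable with ‖∇f(x) − ∇f(y)‖₂ ≤ β‖x − y‖₂ for all x, y ∈ K and 0 ≤ f(x) ≤ B for all x ∈ K. Starting from any x₀ ∈ K, define x_{τ+1} = P_K(x_τ − (1/β)·∇f(x_τ)), where P_K is the Euclidean projection onto K. If T is a positive integer with T ≥ 8βB/δ², then there exists 0 ≤ τ < T such that x_{τ+1} is a δ-stationary point of f on K. -/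
/-!
A projected gradient step `x⁺ = P_K(x - β⁻¹∇f(x))` satisfies the variational inequality
`β⟪x - x⁺, z - x⁺⟫ ≤ ⟪∇f(x), z - x⁺⟫` for all `z ∈ K`. Taking `z = x` and combining with the
descent lemma `f(x⁺) ≤ f(x) + ⟪∇f(x), x⁺ - x⟫ + (β/2)‖x⁺ - x‖²` gives the sufficient decrease
`(β/2)‖x - x⁺‖² ≤ f(x) - f(x⁺)`; taking `z = x⁺ + αu` and using the Lipschitz gradient once
more gives `⟪u, ∇f(x⁺)⟫ ≥ -2β‖x - x⁺‖` for every feasible unit direction `u`. Since `0 ≤ f ≤ B`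
on `K`, the decreases telescope to at most `B`, so some step among the first `T` has
`(β/2)‖x - x⁺‖² ≤ B/T ≤ δ²/(8β)`, i.e. `2β‖x - x⁺‖ ≤ δ`.
-/

open Matrix Finset RealInnerProductSpace

theorem le_add_deriv_add_half_of_deriv_le {φ φ' : ℝ → ℝ} {L : ℝ}
    (hφ : ∀ t ∈ Set.Icc (0 : ℝ) 1, HasDerivAt φ (φ' t) t)
    (hφ' : ∀ t ∈ Set.Ioo (0 : ℝ) 1, φ' t ≤ φ' 0 + L * t) :
    φ 1 ≤ φ 0 + φ' 0 + L / 2 := by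
  set ψ : ℝ → ℝ := fun t => φ t - φ' 0 * t - L / 2 * t ^ 2
  have hψ : ∀ t ∈ Set.Icc (0 : ℝ) 1, HasDerivAt ψ (φ' t - φ' 0 - L * t) t := fun t ht => by
    refine (((hφ t ht).fun_sub ((hasDerivAt_id' t).const_mul (φ' 0))).fun_sub
      ((hasDerivAt_pow 2 t).const_mul (L / 2))).congr_deriv ?_
    push_cast
    ring
  have hanti : AntitoneOn ψ (Set.Icc 0 1) := by
    refine antitoneOn_of_deriv_nonpos (convex_Icc 0 1)
      (fun t ht => (hψ t ht).continuousAt.continuousWithinAt) ?_ ?_ <;> rw [interior_Icc]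
    · exact fun t ht =>
        (hψ t (Set.Ioo_subset_Icc_self ht)).differentiableAt.differentiableWithinAt
    · intro t ht
      rw [(hψ t (Set.Ioo_subset_Icc_self ht)).deriv]
      linarith [hφ' t ht]
  have := hanti (Set.left_mem_Icc.2 zero_le_one) (Set.right_mem_Icc.2 zero_le_one) zero_le_one
  simp only [ψ] at this
  linarith

variable {E : Type*} [NormedAddCommGroup E] [InnerProductSpace ℝ E]

theorem real_inner_sub_le_zero_of_forall_norm_le {K : Set E} (hK : Convex ℝ K) {y p : E}
    (hp : p ∈ K) (hmin : ∀ z ∈ K, ‖p - y‖ ≤ ‖z - y‖) : ∀ z ∈ K, ⟪y - p, z - p⟫ ≤ 0 := by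
  have : Nonempty K := ⟨⟨p, hp⟩⟩
  refine (norm_eq_iInf_iff_real_inner_le_zero hK hp).1 (le_antisymm ?_ ?_)
  · exact le_ciInf fun z => by simpa only [norm_sub_rev y] using hmin z z.2
  · exact ciInf_le (f := fun z : K => ‖y - z‖) ⟨0, by rintro _ ⟨z, rfl⟩; positivity⟩ ⟨p, hp⟩

theorem le_add_inner_add_half_mul_sq_of_gradient_lipschitz [CompleteSpace E] {K : Set E}
    (hK : Convex ℝ K) {β : ℝ} {f : E → ℝ} {g : E → E}
    (hf : ∀ x ∈ K, HasGradientAt f (g x) x) (hg : ∀ x ∈ K, ∀ y ∈ K, ‖g x - g y‖ ≤ β * ‖x - y‖)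
    {a b : E} (ha : a ∈ K) (hb : b ∈ K) :
    f b ≤ f a + ⟪g a, b - a⟫ + β / 2 * ‖b - a‖ ^ 2 := by
  set h := b - a
  have hseg : ∀ t ∈ Set.Icc (0 : ℝ) 1, a + t • h ∈ K := fun t ht => hK.add_smul_sub_mem ha hb ht
  have hderiv : ∀ t ∈ Set.Icc (0 : ℝ) 1,
      HasDerivAt (fun t => f (a + t • h)) ⟪g (a + t • h), h⟫ t := fun t ht => by
    have := (hf _ (hseg t ht)).hasFDerivAt.comp_hasDerivAt t
      (((hasDerivAt_id t).smul_const h).const_add a)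
    simpa [Function.comp_def] using this
  have hslope : ∀ t ∈ Set.Ioo (0 : ℝ) 1,
      ⟪g (a + t • h), h⟫ ≤ ⟪g (a + (0 : ℝ) • h), h⟫ + β * ‖h‖ ^ 2 * t := fun t ht => by
    have hLip := hg _ (hseg t (Set.Ioo_subset_Icc_self ht)) a ha
    rw [add_sub_cancel_left, norm_smul, Real.norm_of_nonneg ht.1.le] at hLip
    calc ⟪g (a + t • h), h⟫ = ⟪g a, h⟫ + ⟪g (a + t • h) - g a, h⟫ := by
          rw [inner_sub_left]; ring
      _ ≤ ⟪g a, h⟫ + ‖g (a + t • h) - g a‖ * ‖h‖ := by gcongr; exact real_inner_le_norm _ _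
      _ ≤ ⟪g a, h⟫ + β * (t * ‖h‖) * ‖h‖ := by gcongr
      _ = ⟪g (a + (0 : ℝ) • h), h⟫ + β * ‖h‖ ^ 2 * t := by simp only [zero_smul, add_zero]; ring
  have := le_add_deriv_add_half_of_deriv_le hderiv hslope
  simp only [zero_smul, one_smul, add_zero, h, add_sub_cancel] at this
  linarith

theorem mul_real_inner_sub_le_of_forall_norm_le {K : Set E} (hK : Convex ℝ K) {β : ℝ}
    (hβ : 0 < β) {x v p : E} (hp : p ∈ K)
    (hmin : ∀ z ∈ K, ‖p - (x - (1 / β) • v)‖ ≤ ‖z - (x - (1 / β) • v)‖) {z : E} (hz : z ∈ K) :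
    β * ⟪x - p, z - p⟫ ≤ ⟪v, z - p⟫ := by
  have hvi := real_inner_sub_le_zero_of_forall_norm_le hK hp hmin z hz
  rw [sub_right_comm, inner_sub_left, real_inner_smul_left] at hvi
  have := mul_le_mul_of_nonneg_left hvi hβ.le
  rw [mul_sub, ← mul_assoc, mul_one_div_cancel hβ.ne', one_mul] at this
  linarith

theorem mul_sq_norm_sub_le_sub_of_forall_norm_le [CompleteSpace E] {K : Set E}
    (hK : Convex ℝ K) {β : ℝ} (hβ : 0 < β) {f : E → ℝ} {g : E → E}
    (hf : ∀ x ∈ K, HasGradientAt f (g x) x) (hg : ∀ x ∈ K, ∀ y ∈ K, ‖g x - g y‖ ≤ β * ‖x - y‖)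
    {x p : E} (hx : x ∈ K) (hp : p ∈ K)
    (hmin : ∀ z ∈ K, ‖p - (x - (1 / β) • g x)‖ ≤ ‖z - (x - (1 / β) • g x)‖) :
    β / 2 * ‖x - p‖ ^ 2 ≤ f x - f p := by
  have hvi := mul_real_inner_sub_le_of_forall_norm_le hK hβ hp hmin hx
  have hdesc := le_add_inner_add_half_mul_sq_of_gradient_lipschitz hK hf hg hx hp
  rw [real_inner_self_eq_norm_sq, ← neg_sub x p, inner_neg_right] at *
  rw [norm_neg] at hdesc
  linarith

theorem neg_two_mul_norm_sub_le_real_inner_of_forall_norm_le {K : Set E} (hK : Convex ℝ K)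
    {β : ℝ} (hβ : 0 < β) {g : E → E} (hg : ∀ x ∈ K, ∀ y ∈ K, ‖g x - g y‖ ≤ β * ‖x - y‖)
    {x p : E} (hx : x ∈ K) (hp : p ∈ K)
    (hmin : ∀ z ∈ K, ‖p - (x - (1 / β) • g x)‖ ≤ ‖z - (x - (1 / β) • g x)‖)
    {u : E} (hu : ‖u‖ = 1) {α : ℝ} (hα : 0 < α) (hpu : p + α • u ∈ K) :
    -(2 * β * ‖x - p‖) ≤ ⟪u, g p⟫ := by
  have hvi := mul_real_inner_sub_le_of_forall_norm_le hK hβ hp hmin hpu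
  rw [add_sub_cancel_left, real_inner_smul_right, real_inner_smul_right, mul_left_comm,
    mul_le_mul_iff_right₀ hα] at hvi
  have hlower : ∀ a : E, -‖a‖ ≤ ⟪a, u⟫ := fun a => by
    simpa only [hu, mul_one] using (neg_le_neg (abs_real_inner_le_norm a u)).trans (neg_abs_le _)
  have hLip : ‖g p - g x‖ ≤ β * ‖x - p‖ := norm_sub_rev x p ▸ hg p hp x hx
  have hgp : ⟪u, g p⟫ = ⟪g x, u⟫ + ⟪g p - g x, u⟫ := by
    rw [inner_sub_left, real_inner_comm]; ring
  rw [hgp]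
  nlinarith [hlower (x - p), hlower (g p - g x)]

theorem exists_lt_le_div_of_le_sub_succ {a F : ℕ → ℝ} {B : ℝ} {T : ℕ} (hT : 0 < T)
    (ha : ∀ τ, a τ ≤ F τ - F (τ + 1)) (hF0 : F 0 ≤ B) (hFT : 0 ≤ F T) :
    ∃ τ < T, a τ ≤ B / T := by
  have hsum : ∑ τ ∈ Finset.range T, a τ ≤ ∑ _τ ∈ Finset.range T, B / T :=
    calc ∑ τ ∈ Finset.range T, a τ ≤ ∑ τ ∈ Finset.range T, (F τ - F (τ + 1)) :=
          Finset.sum_le_sum fun τ _ => ha τ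
      _ = F 0 - F T := Finset.sum_range_sub' F T
      _ ≤ B := by linarith
      _ = ∑ _τ ∈ Finset.range T, B / T := by
          rw [Finset.sum_const, Finset.card_range, nsmul_eq_mul,
            mul_div_cancel₀ _ (Nat.cast_ne_zero.2 hT.ne')]
  simpa only [Finset.mem_range] using
    Finset.exists_le_of_sum_le (Finset.nonempty_range_iff.2 hT.ne') hsum

theorem stmt_15_general {n : ℕ} (K : Set (EuclideanSpace ℝ (Fin n)))
    (hKconv : Convex ℝ K)
    (δ B β : ℝ) (hδ : 0 < δ) (hβ : 0 < β)
    (f : EuclideanSpace ℝ (Fin n) → ℝ) (g : EuclideanSpace ℝ (Fin n) → EuclideanSpace ℝ (Fin n))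
    (hdiff : ∀ x, HasGradientAt f (g x) x)
    (hsmooth : ∀ x ∈ K, ∀ y ∈ K, ‖g x - g y‖ ≤ β * ‖x - y‖)
    (hrange : ∀ x ∈ K, 0 ≤ f x ∧ f x ≤ B)
    (proj : EuclideanSpace ℝ (Fin n) → EuclideanSpace ℝ (Fin n))
    (hproj : ∀ y, proj y ∈ K ∧ ∀ z ∈ K, ‖proj y - y‖ ≤ ‖z - y‖)
    (x : ℕ → EuclideanSpace ℝ (Fin n)) (hx0 : x 0 ∈ K)
    (hiter : ∀ τ, x (τ + 1) = proj (x τ - (1 / β) • g (x τ)))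
    (T : ℕ) (hT : 0 < T) (hTbig : 8 * β * B / δ ^ 2 ≤ (T : ℝ)) :
    ∃ τ < T, x (τ + 1) ∈ K ∧
      ∀ u : EuclideanSpace ℝ (Fin n), ‖u‖ = 1 →
        (∃ α : ℝ, 0 < α ∧ x (τ + 1) + α • u ∈ K) → -δ ≤ ⟪u, g (x (τ + 1))⟫ := by
  have hstep : ∀ τ, x (τ + 1) ∈ K ∧ ∀ z ∈ K,
      ‖x (τ + 1) - (x τ - (1 / β) • g (x τ))‖ ≤ ‖z - (x τ - (1 / β) • g (x τ))‖ :=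
    fun τ => hiter τ ▸ hproj _
  have hxK : ∀ τ, x τ ∈ K := fun
    | 0 => hx0
    | τ + 1 => (hstep τ).1
  have hf : ∀ y ∈ K, HasGradientAt f (g y) y := fun y _ => hdiff y
  obtain ⟨τ, hτT, hτ⟩ := exists_lt_le_div_of_le_sub_succ (F := fun τ => f (x τ)) hT
    (fun τ => mul_sq_norm_sub_le_sub_of_forall_norm_le hKconv hβ hf hsmooth (hxK τ) (hstep τ).1
      (hstep τ).2) (hrange _ (hxK 0)).2 (hrange _ (hxK T)).1
  refine ⟨τ, hτT, hxK _, fun u hu ⟨α, hα, hαu⟩ => ?_⟩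
  have hsmall : 2 * β * ‖x τ - x (τ + 1)‖ ≤ δ := by
    have hTpos : (0 : ℝ) < T := Nat.cast_pos.2 hT
    have h8 : 8 * β * B ≤ T * δ ^ 2 := by
      rwa [div_le_iff₀ (by positivity)] at hTbig
    -- `(2βd)² = 8β · (β/2)d² ≤ 8βB/T ≤ δ²` with `d = ‖x τ - x (τ + 1)‖`
    have : (2 * β * ‖x τ - x (τ + 1)‖) ^ 2 ≤ δ ^ 2 := by
      rw [le_div_iff₀ hTpos] at hτ
      nlinarith
    exact abs_le_of_sq_le_sq' this hδ.le |>.2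
  linarith [neg_two_mul_norm_sub_le_real_inner_of_forall_norm_le hKconv hβ hsmooth (hxK τ)
    (hstep τ).1 (hstep τ).2 hu hα hαu]

/-- projected gradient descent finds a `δ`-stationary point in
`O(βB/δ²)` iterations. -/
theorem stmt_15 {n : ℕ} (K : Set (EuclideanSpace ℝ (Fin n)))
    (hKne : K.Nonempty) (hKcl : IsClosed K) (hKconv : Convex ℝ K)
    (δ B β : ℝ) (hδ : 0 < δ) (hB : 0 ≤ B) (hβ : 0 < β)
    (f : EuclideanSpace ℝ (Fin n) → ℝ) (g : EuclideanSpace ℝ (Fin n) → EuclideanSpace ℝ (Fin n))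
    (hdiff : ∀ x, HasGradientAt f (g x) x)
    (hsmooth : ∀ x ∈ K, ∀ y ∈ K, ‖g x - g y‖ ≤ β * ‖x - y‖)
    (hrange : ∀ x ∈ K, 0 ≤ f x ∧ f x ≤ B)
    (proj : EuclideanSpace ℝ (Fin n) → EuclideanSpace ℝ (Fin n))
    (hproj : ∀ y, proj y ∈ K ∧ ∀ z ∈ K, ‖proj y - y‖ ≤ ‖z - y‖)
    (x : ℕ → EuclideanSpace ℝ (Fin n)) (hx0 : x 0 ∈ K)
    (hiter : ∀ τ, x (τ + 1) = proj (x τ - (1 / β) • g (x τ)))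
    (T : ℕ) (hT : 0 < T) (hTbig : 8 * β * B / δ ^ 2 ≤ (T : ℝ)) :
    ∃ τ < T, x (τ + 1) ∈ K ∧
      ∀ u : EuclideanSpace ℝ (Fin n), ‖u‖ = 1 →
        (∃ α : ℝ, 0 < α ∧ x (τ + 1) + α • u ∈ K) → -δ ≤ ⟪u, g (x (τ + 1))⟫ :=
  stmt_15_general K hKconv δ B β hδ hβ f g hdiff hsmooth hrange proj hproj x hx0 hiter T hT hTbig
end

section
/- Let K ⊆ ℝ^n be a nonempty closed convex set, β > 0, B ≥ 0, and let f : ℝ^n → ℝ be differentiable with ‖∇f(x) − ∇f(y)‖₂ ≤ β‖x − y‖₂ for all x, y ∈ K and 0 ≤ f(x) ≤ B for all x ∈ K. Set η = 1/β and, starting from any x₀ ∈ K, define x_{τ+1} = P_K(x_τ − η∇f(x_τ)), where P_K is the Euclidean projection onto K. Then for every positive integer T: min_{0≤τ<T} (1/η)·‖P_K(x_τ − η∇f(x_τ)) − x_τ‖₂ ≤ √(2βB/T). -/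
open Matrix Finset RealInnerProductSpace

/-!
Since `∇f` is `β`-Lipschitz on the convex set `K`, `f` lies below its tangent paraboloid of
curvature `β` there. The projected step `p = P_K(x - ∇f(x)/β)` satisfies the variational inequality
of the projection, `⟪∇f(x), p - x⟫ ≤ -β ‖p - x‖²`, so each step decreases `f` by at least
`(β/2) ‖p - x‖²`. Summing over `T` steps, these decrements total at most `B`, so the smallest one
is at most `B / T`.
-/

open Set

lemma le_add_add_half_of_hasDerivAt_le {φ φ' : ℝ → ℝ} {c M : ℝ}
    (hφ : ∀ t ∈ Icc (0 : ℝ) 1, HasDerivAt φ (φ' t) t)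
    (hle : ∀ t ∈ Icc (0 : ℝ) 1, φ' t ≤ c + M * t) :
    φ 1 ≤ φ 0 + c + M / 2 := by
  let ψ t := φ t - c * t - M / 2 * t ^ 2
  have hψ : ∀ t ∈ Icc (0 : ℝ) 1, HasDerivAt ψ (φ' t - c - M * t) t := fun t ht => by
    refine (((hφ t ht).sub ((hasDerivAt_id' t).const_mul c)).sub
      ((hasDerivAt_pow 2 t).const_mul (M / 2))).congr_deriv ?_
    norm_num
    ring
  have hanti : AntitoneOn ψ (Icc 0 1) := by
    refine antitoneOn_of_hasDerivWithinAt_nonpos (f' := fun t => φ' t - c - M * t)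
      (convex_Icc 0 1) (fun t ht => (hψ t ht).continuousAt.continuousWithinAt)
      (fun t ht => ?_) (fun t ht => ?_)
    all_goals rw [interior_Icc] at ht
    · exact (hψ t (Ioo_subset_Icc_self ht)).hasDerivWithinAt
    · linarith [hle t (Ioo_subset_Icc_self ht)]
  have := hanti (left_mem_Icc.2 zero_le_one) (right_mem_Icc.2 zero_le_one) zero_le_one
  simp only [ψ] at this
  linarith

lemma exists_lt_le_div_of_le_sub {u d : ℕ → ℝ} {B : ℝ} {T : ℕ} (hT : 0 < T)
    (hstep : ∀ τ, u (τ + 1) ≤ u τ - d τ) (hB : u 0 - u T ≤ B) :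
    ∃ τ < T, d τ ≤ B / T := by
  have hsum : ∑ τ ∈ Finset.range T, d τ ≤ ∑ _τ ∈ Finset.range T, B / T :=
    calc ∑ τ ∈ Finset.range T, d τ ≤ ∑ τ ∈ Finset.range T, (u τ - u (τ + 1)) :=
          Finset.sum_le_sum fun τ _ => by linarith [hstep τ]
      _ = u 0 - u T := Finset.sum_range_sub' u T
      _ ≤ B := hB
      _ = ∑ _τ ∈ Finset.range T, B / T := by
          rw [Finset.sum_const, Finset.card_range, nsmul_eq_mul]
          field_simp
  obtain ⟨τ, hτ, hle⟩ := Finset.exists_le_of_sum_le (Finset.nonempty_range_iff.2 hT.ne') hsum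
  exact ⟨τ, Finset.mem_range.1 hτ, hle⟩

variable {E : Type*} [NormedAddCommGroup E] [InnerProductSpace ℝ E]

theorem Convex.real_inner_sub_le_zero_of_forall_norm_sub_le {K : Set E} (hK : Convex ℝ K)
    {u p : E} (hp : p ∈ K) (hmin : ∀ z ∈ K, ‖p - u‖ ≤ ‖z - u‖) :
    ∀ z ∈ K, ⟪u - p, z - p⟫ ≤ 0 := by
  have : Nonempty K := ⟨⟨p, hp⟩⟩
  refine (norm_eq_iInf_iff_real_inner_le_zero hK hp).1 (le_antisymm ?_ ?_)
  · exact le_ciInf fun w => by simpa only [norm_sub_rev u] using hmin w w.2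
  · exact ciInf_le ⟨0, by rintro r ⟨w, rfl⟩; exact norm_nonneg _⟩ (⟨p, hp⟩ : K)

section GradientLipschitz

variable [CompleteSpace E] {f : E → ℝ} {g : E → E}

lemma HasGradientAt.hasDerivAt_comp_add_smul {a v : E} {t : ℝ}
    (h : HasGradientAt f (g (a + t • v)) (a + t • v)) :
    HasDerivAt (fun s : ℝ => f (a + s • v)) ⟪g (a + t • v), v⟫ t := by
  have hline : HasDerivAt (fun s : ℝ => a + s • v) v t := by
    simpa using ((hasDerivAt_id t).smul_const v).const_add a
  simpa [InnerProductSpace.toDual_apply_apply, Function.comp_def] using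
    h.hasFDerivAt.comp_hasDerivAt t hline

variable {K : Set E} {β : ℝ} (hK : Convex ℝ K) (hf : ∀ x ∈ K, HasGradientAt f (g x) x)
  (hg : ∀ x ∈ K, ∀ y ∈ K, ‖g x - g y‖ ≤ β * ‖x - y‖)
include hK hf hg

/-- The descent lemma. -/
theorem Convex.apply_le_add_inner_add_of_gradient_lipschitz {a b : E} (ha : a ∈ K) (hb : b ∈ K) :
    f b ≤ f a + ⟪g a, b - a⟫ + β / 2 * ‖b - a‖ ^ 2 := by
  set v := b - a
  have hseg : ∀ t ∈ Icc (0 : ℝ) 1, a + t • v ∈ K := fun t ht => hK.add_smul_sub_mem ha hb ht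
  have hslope : ∀ t ∈ Icc (0 : ℝ) 1, ⟪g (a + t • v), v⟫ ≤ ⟪g a, v⟫ + β * ‖v‖ ^ 2 * t := by
    intro t ht
    have hlip : ‖g (a + t • v) - g a‖ ≤ β * (t * ‖v‖) := by
      simpa [norm_smul, abs_of_nonneg ht.1] using hg _ (hseg t ht) a ha
    calc ⟪g (a + t • v), v⟫ = ⟪g a, v⟫ + ⟪g (a + t • v) - g a, v⟫ := by
          rw [inner_sub_left]; ring
      _ ≤ ⟪g a, v⟫ + ‖g (a + t • v) - g a‖ * ‖v‖ := by gcongr; exact real_inner_le_norm _ _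
      _ ≤ ⟪g a, v⟫ + β * (t * ‖v‖) * ‖v‖ := by gcongr
      _ = ⟪g a, v⟫ + β * ‖v‖ ^ 2 * t := by ring
  have := le_add_add_half_of_hasDerivAt_le
    (fun t ht => (hf _ (hseg t ht)).hasDerivAt_comp_add_smul) hslope
  simp only [one_smul, zero_smul, add_zero, v, add_sub_cancel] at this
  linarith

theorem Convex.apply_le_sub_of_projected_gradient_step (hβ : 0 < β) {a p : E} (ha : a ∈ K)
    (hp : p ∈ K) (hproj : ⟪(a - (1 / β) • g a) - p, a - p⟫ ≤ 0) :
    f p ≤ f a - β / 2 * ‖p - a‖ ^ 2 := by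
  have hexpand : ⟪(a - (1 / β) • g a) - p, a - p⟫ = ‖p - a‖ ^ 2 + 1 / β * ⟪g a, p - a⟫ := by
    rw [sub_right_comm, inner_sub_left, real_inner_smul_left, real_inner_self_eq_norm_sq,
      norm_sub_rev, ← neg_sub p a, inner_neg_right]
    ring
  have hinner : β * ‖p - a‖ ^ 2 ≤ -⟪g a, p - a⟫ :=
    calc β * ‖p - a‖ ^ 2 ≤ β * (1 / β * -⟪g a, p - a⟫) := by gcongr; linarith
      _ = -⟪g a, p - a⟫ := by field_simp
  linarith [hK.apply_le_add_inner_add_of_gradient_lipschitz hf hg ha hp]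

end GradientLipschitz

theorem stmt_18_general {n : ℕ} (K : Set (EuclideanSpace ℝ (Fin n))) (hKconv : Convex ℝ K)
    (β B : ℝ) (hβ : 0 < β)
    (f : EuclideanSpace ℝ (Fin n) → ℝ) (g : EuclideanSpace ℝ (Fin n) → EuclideanSpace ℝ (Fin n))
    (hdiff : ∀ x, HasGradientAt f (g x) x)
    (hsmooth : ∀ x ∈ K, ∀ y ∈ K, ‖g x - g y‖ ≤ β * ‖x - y‖)
    (hrange : ∀ x ∈ K, 0 ≤ f x ∧ f x ≤ B)
    (η : ℝ) (hη : η = 1 / β)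
    (proj : EuclideanSpace ℝ (Fin n) → EuclideanSpace ℝ (Fin n))
    (hproj : ∀ y, proj y ∈ K ∧ ∀ z ∈ K, ‖proj y - y‖ ≤ ‖z - y‖)
    (x : ℕ → EuclideanSpace ℝ (Fin n)) (hx0 : x 0 ∈ K)
    (hiter : ∀ τ, x (τ + 1) = proj (x τ - η • g (x τ)))
    (T : ℕ) (hT : 0 < T) :
    ∃ τ < T, (1 / η) * ‖proj (x τ - η • g (x τ)) - x τ‖ ≤ Real.sqrt (2 * β * B / T) := by
  subst hη
  have hxK : ∀ τ, x τ ∈ K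
    | 0 => hx0
    | τ + 1 => hiter τ ▸ (hproj _).1
  have hdecrease (τ : ℕ) : f (x (τ + 1)) ≤ f (x τ) - β / 2 * ‖x (τ + 1) - x τ‖ ^ 2 := by
    obtain ⟨hpK, hpmin⟩ := hproj (x τ - (1 / β) • g (x τ))
    rw [hiter τ]
    exact hKconv.apply_le_sub_of_projected_gradient_step (fun x _ => hdiff x) hsmooth hβ (hxK τ)
      hpK (hKconv.real_inner_sub_le_zero_of_forall_norm_sub_le hpK hpmin _ (hxK τ))
  obtain ⟨τ, hτ, hle⟩ := exists_lt_le_div_of_le_sub (u := fun τ => f (x τ)) hT hdecrease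
    (by linarith [(hrange _ hx0).2, (hrange _ (hxK T)).1] : f (x 0) - f (x T) ≤ B)
  refine ⟨τ, hτ, Real.le_sqrt_of_sq_le ?_⟩
  rw [← hiter τ, one_div_one_div]
  calc (β * ‖x (τ + 1) - x τ‖) ^ 2 = 2 * β * (β / 2 * ‖x (τ + 1) - x τ‖ ^ 2) := by ring
    _ ≤ 2 * β * (B / T) := by gcongr
    _ = 2 * β * B / T := by ring

/-- descent bound for projected gradient descent on a smooth bounded
objective over a closed convex set. -/
theorem stmt_18 {n : ℕ} (K : Set (EuclideanSpace ℝ (Fin n)))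
    (hKne : K.Nonempty) (hKcl : IsClosed K) (hKconv : Convex ℝ K)
    (β B : ℝ) (hβ : 0 < β) (hB : 0 ≤ B)
    (f : EuclideanSpace ℝ (Fin n) → ℝ) (g : EuclideanSpace ℝ (Fin n) → EuclideanSpace ℝ (Fin n))
    (hdiff : ∀ x, HasGradientAt f (g x) x)
    (hsmooth : ∀ x ∈ K, ∀ y ∈ K, ‖g x - g y‖ ≤ β * ‖x - y‖)
    (hrange : ∀ x ∈ K, 0 ≤ f x ∧ f x ≤ B)
    (η : ℝ) (hη : η = 1 / β)
    (proj : EuclideanSpace ℝ (Fin n) → EuclideanSpace ℝ (Fin n))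
    (hproj : ∀ y, proj y ∈ K ∧ ∀ z ∈ K, ‖proj y - y‖ ≤ ‖z - y‖)
    (x : ℕ → EuclideanSpace ℝ (Fin n)) (hx0 : x 0 ∈ K)
    (hiter : ∀ τ, x (τ + 1) = proj (x τ - η • g (x τ)))
    (T : ℕ) (hT : 0 < T) :
    ∃ τ < T, (1 / η) * ‖proj (x τ - η • g (x τ)) - x τ‖ ≤ Real.sqrt (2 * β * B / T) :=
  stmt_18_general K hKconv β B hβ f g hdiff hsmooth hrange η hη proj hproj x hx0 hiter T hT
end

section
/- Let K ⊆ ℝ^n be a nonempty closed convex set, β > 0, δ > 0, and let f : ℝ^n → ℝ be differentiable with ‖∇f(x) − ∇f(y)‖₂ ≤ β‖x − y‖₂ for all x, y ∈ K. Set η = 1/β, let x ∈ K, and let x⁺ = P_K(x − η∇f(x)). If ‖x⁺ − x‖₂ ≤ ηδ/2, then for every unit vector u of the form u = λ(z − x⁺) with z ∈ K and λ > 0 (i.e., every unit vector in the tangent cone cone(K − {x⁺})), one has uᵀ∇f(x⁺) ≥ −δ. -/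
open Matrix Finset RealInnerProductSpace

/-!
The variational inequality of the projection, `⟪(x - η g x) - x⁺, z - x⁺⟫ ≤ 0`, bounds
`⟪u, g x⟫` below by `-‖x⁺ - x‖ / η`; the Lipschitz bound moves the gradient from `x` to
`x⁺` at the cost of `β ‖x⁺ - x‖ = ‖x⁺ - x‖ / η`. Each term is at least `-δ / 2` by the
step-length assumption.
-/

section ProjectedGradient

variable {E : Type*} [NormedAddCommGroup E] [InnerProductSpace ℝ E]

theorem real_inner_sub_nonpos_of_forall_norm_sub_le {K : Set E} (hK : Convex ℝ K) {p y : E}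
    (hy : y ∈ K) (hmin : ∀ z ∈ K, ‖y - p‖ ≤ ‖z - p‖) {z : E} (hz : z ∈ K) :
    ⟪p - y, z - y⟫ ≤ 0 := by
  have : Nonempty K := ⟨⟨y, hy⟩⟩
  refine (norm_eq_iInf_iff_real_inner_le_zero hK hy).1 (le_antisymm ?_ ?_) z hz
  · exact le_ciInf fun w => by simpa only [norm_sub_rev p] using hmin w w.2
  · exact ciInf_le (f := fun w : K => ‖p - (w : E)‖)
      ⟨0, by rintro _ ⟨w, rfl⟩; exact norm_nonneg _⟩ ⟨y, hy⟩

theorem neg_norm_le_real_inner_of_norm_eq_one {u : E} (hu : ‖u‖ = 1) (v : E) :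
    -‖v‖ ≤ ⟪u, v⟫ := by
  simpa [hu] using neg_le_of_abs_le (abs_real_inner_le_norm u v)

theorem neg_norm_sub_div_le_inner_of_inner_nonpos {x y u v : E} {η : ℝ} (hη : 0 < η)
    (hu : ‖u‖ = 1) (h : ⟪x - η • v - y, u⟫ ≤ 0) : -(‖y - x‖ / η) ≤ ⟪u, v⟫ := by
  have hcs := neg_norm_le_real_inner_of_norm_eq_one hu (x - y)
  rw [sub_right_comm, inner_sub_left, real_inner_smul_left, real_inner_comm u,
    real_inner_comm u v] at h
  rw [← neg_div, div_le_iff₀ hη, norm_sub_rev]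
  linarith

end ProjectedGradient

theorem stmt_19_general {n : ℕ} (K : Set (EuclideanSpace ℝ (Fin n)))
    (hKconv : Convex ℝ K)
    (β δ : ℝ) (hβ : 0 < β)
    (g : EuclideanSpace ℝ (Fin n) → EuclideanSpace ℝ (Fin n))
    (hsmooth : ∀ x ∈ K, ∀ y ∈ K, ‖g x - g y‖ ≤ β * ‖x - y‖)
    (η : ℝ) (hη : η = 1 / β)
    (x : EuclideanSpace ℝ (Fin n)) (hx : x ∈ K)
    (xplus : EuclideanSpace ℝ (Fin n)) (hxplusK : xplus ∈ K)
    (hxplusProj : ∀ z ∈ K, ‖xplus - (x - η • g x)‖ ≤ ‖z - (x - η • g x)‖)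
    (hclose : ‖xplus - x‖ ≤ η * δ / 2) :
    ∀ (u z : EuclideanSpace ℝ (Fin n)) (lam : ℝ), z ∈ K → 0 < lam →
      u = lam • (z - xplus) → ‖u‖ = 1 → -δ ≤ ⟪u, g xplus⟫ := by
  rintro u z lam hz hlam rfl hu
  have hη0 : 0 < η := by rw [hη]; positivity
  have hstep_le : ‖xplus - x‖ / η ≤ δ / 2 := by
    rw [div_le_iff₀ hη0]; linarith
  have hnormal : ⟪x - η • g x - xplus, lam • (z - xplus)⟫ ≤ 0 := by
    rw [real_inner_smul_right]
    exact mul_nonpos_of_nonneg_of_nonpos hlam.le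
      (real_inner_sub_nonpos_of_forall_norm_sub_le hKconv hxplusK hxplusProj hz)
  have hgrad_x := neg_norm_sub_div_le_inner_of_inner_nonpos hη0 hu hnormal
  have hlip : -(‖xplus - x‖ / η) ≤ ⟪lam • (z - xplus), g xplus - g x⟫ := by
    have h := hsmooth xplus hxplusK x hx
    have hβη : β * ‖xplus - x‖ = ‖xplus - x‖ / η := by
      rw [hη, div_div_eq_mul_div, div_one, mul_comm]
    rw [hβη] at h
    exact (neg_le_neg h).trans (neg_norm_le_real_inner_of_norm_eq_one hu _)
  rw [inner_sub_right] at hlip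
  linarith

/-- a short projected-gradient step certifies approximate stationarity at
the new point (in the tangent cone sense). -/
theorem stmt_19 {n : ℕ} (K : Set (EuclideanSpace ℝ (Fin n)))
    (hKne : K.Nonempty) (hKcl : IsClosed K) (hKconv : Convex ℝ K)
    (β δ : ℝ) (hβ : 0 < β) (hδ : 0 < δ)
    (f : EuclideanSpace ℝ (Fin n) → ℝ) (g : EuclideanSpace ℝ (Fin n) → EuclideanSpace ℝ (Fin n))
    (hdiff : ∀ x, HasGradientAt f (g x) x)
    (hsmooth : ∀ x ∈ K, ∀ y ∈ K, ‖g x - g y‖ ≤ β * ‖x - y‖)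
    (η : ℝ) (hη : η = 1 / β)
    (x : EuclideanSpace ℝ (Fin n)) (hx : x ∈ K)
    (xplus : EuclideanSpace ℝ (Fin n)) (hxplusK : xplus ∈ K)
    (hxplusProj : ∀ z ∈ K, ‖xplus - (x - η • g x)‖ ≤ ‖z - (x - η • g x)‖)
    (hclose : ‖xplus - x‖ ≤ η * δ / 2) :
    ∀ (u z : EuclideanSpace ℝ (Fin n)) (lam : ℝ), z ∈ K → 0 < lam →
      u = lam • (z - xplus) → ‖u‖ = 1 → -δ ≤ ⟪u, g xplus⟫ :=
  stmt_19_general K hKconv β δ hβ g hsmooth η hη x hx xplus hxplusK hxplusProj hclose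
end
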